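/- Call a finite word ω over D neutral if red(ω) = 1, negative if red(ω) is a nonempty product of symbols from D_α only, and positive if red(ω) is a nonempty product of symbols from D_β only. If ω is neutral, negative or positive, then for every n ∈ ℕ the n-fold concatenation ω^n is an admissible word of Σ_D (it appears in some element of Σ_D); moreover, the bi-infinite periodic sequence x defined by x_{i} = ω_{(i mod |ω|)+1} for all i ∈ ℤ belongs to Σ_D. -/

import Mathlib

open MeasureTheory Topology Filter
open scoped ENNReal NNReal


/-! ### The alphabet of the (M,N) Dyck–Motzkin shift -/

/-- The alphabet `D = D_α ∪ D_0 ∪ D_β` of the `(M,N)` Dyck–Motzkin shift: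
`la k` is the left bracket `α_k`, `u k` is the unit `1_k`, `ra k` is the right bracket `β_k`. -/
inductive DMSym (M N : ℕ) : Type where
  | la : Fin M → DMSym M N
  | u  : Fin N → DMSym M N
  | ra : Fin M → DMSym M N
deriving DecidableEq

namespace DMSym

def equivSum (M N : ℕ) : DMSym M N ≃ (Fin M ⊕ Fin N ⊕ Fin M) where
  toFun s := match s with
    | .la k => Sum.inl k
    | .u k => Sum.inr (Sum.inl k)
    | .ra k => Sum.inr (Sum.inr k)
  invFun s := match s with
    | Sum.inl k => .la k
    | Sum.inr (Sum.inl k) => .u k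
    | Sum.inr (Sum.inr k) => .ra k
  left_inv s := by cases s <;> rfl
  right_inv s := by rcases s with k | k | k <;> rfl

instance (M N : ℕ) : Fintype (DMSym M N) := Fintype.ofEquiv _ (equivSum M N).symm
instance (M N : ℕ) : TopologicalSpace (DMSym M N) := ⊥
instance (M N : ℕ) : DiscreteTopology (DMSym M N) := ⟨rfl⟩
instance (M N : ℕ) : MeasurableSpace (DMSym M N) := ⊤
instance (M N : ℕ) : BorelSpace (DMSym M N) := ⟨borel_eq_top_of_discrete.symm⟩

end DMSym

/-- Nonzero elements of the Dyck–Motzkin monoid with zero are represented in normal form: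
`some (bs, as)` is the reduced word `β_{bs(0)} ⋯ β_{bs(r)} α_{as(0)} ⋯ α_{as(s)}`
(in particular `some ([], [])` is the unit element `1`); `none` is the zero element `0`. -/
abbrev DyckElem (M : ℕ) := Option (List (Fin M) × List (Fin M))

/-- Multiplication, in the Dyck–Motzkin monoid with zero, of an element in normal form on
the right by a generator: units are absorbed, a left bracket is appended, and a right bracket
either closes the last left bracket (if the indices match), is appended (if there is no left
bracket to close), or produces the zero element (if the indices do not match). -/
def dyckStep {M N : ℕ} : DyckElem M → DMSym M N → DyckElem M
  | none, _ => none
  | some (bs, as), .la k => some (bs, as ++ [k])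
  | some (bs, as), .u _ => some (bs, as)
  | some (bs, as), .ra k =>
      match as.getLast? with
      | none => some (bs ++ [k], [])
      | some j => if j = k then some (bs, as.dropLast) else none

/-- `red w` is the image of the word `w` in the Dyck–Motzkin monoid with zero. -/
def red {M N : ℕ} (w : List (DMSym M N)) : DyckElem M :=
  w.foldl dyckStep (some ([], []))

/-- The word `x_j x_{j+1} ⋯ x_k` read off a bi-infinite sequence `x`. -/
def wordAt {M N : ℕ} (x : ℤ → DMSym M N) (j k : ℤ) : List (DMSym M N) :=
  (List.range (k + 1 - j).toNat).map fun n => x (j + n)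

/-- The `(M,N)` Dyck–Motzkin shift `Σ_D`. -/
def SigmaD (M N : ℕ) : Set (ℤ → DMSym M N) :=
  {x | ∀ j k : ℤ, j < k → red (wordAt x j k) ≠ none}

/-- The left shift `σ`. -/
def shift {A : Type*} : (ℤ → A) → (ℤ → A) := fun x i => x (i + 1)

/-- The inverse `σ⁻¹` of the left shift. -/
def shiftInv {A : Type*} : (ℤ → A) → (ℤ → A) := fun x i => x (i - 1)

lemma wordAt_shift {M N : ℕ} (x : ℤ → DMSym M N) (j k : ℤ) :
    wordAt (shift x) j k = wordAt x (j + 1) (k + 1) := by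
  simp only [wordAt, shift]
  rw [show (k + 1 + 1 - (j + 1) : ℤ) = k + 1 - j by ring]
  exact List.map_congr_left fun n _ => by rw [show (j + n + 1 : ℤ) = j + 1 + n by ring]

lemma shift_mem_SigmaD {M N : ℕ} {x : ℤ → DMSym M N} (hx : x ∈ SigmaD M N) :
    shift x ∈ SigmaD M N := by
  intro j k hjk
  rw [wordAt_shift]
  exact hx (j + 1) (k + 1) (by omega)

/-- The left shift acting on `Σ_D`. -/
def shiftD (M N : ℕ) : ↥(SigmaD M N) → ↥(SigmaD M N) :=
  fun x => ⟨shift x.val, shift_mem_SigmaD x.property⟩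

/-- A word is neutral if it reduces to the unit element of the Dyck–Motzkin monoid. -/
def NeutralWord {M N : ℕ} (w : List (DMSym M N)) : Prop := red w = some ([], [])

/-- A word is negative if it reduces to a nonempty product of left-bracket symbols only. -/
def NegativeWord {M N : ℕ} (w : List (DMSym M N)) : Prop :=
  ∃ as : List (Fin M), as ≠ [] ∧ red w = some ([], as)

/-- A word is positive if it reduces to a nonempty product of right-bracket symbols only. -/
def PositiveWord {M N : ℕ} (w : List (DMSym M N)) : Prop :=
  ∃ bs : List (Fin M), bs ≠ [] ∧ red w = some (bs, [])

/-- A word is admissible for `Σ_D` if it occurs as a consecutive block in some element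
of `Σ_D`. -/
def AdmissibleWord (M N : ℕ) (w : List (DMSym M N)) : Prop :=
  ∃ x ∈ SigmaD M N, ∃ j : ℤ, ∀ i : Fin w.length, x (j + (i : ℕ)) = w.get i

/-- The bi-infinite periodic sequence `x_i = w_{(i mod |w|) + 1}` obtained by repeating a
nonempty word `w`. -/
def perSeq {M N : ℕ} (w : List (DMSym M N)) (hw : w ≠ []) : ℤ → DMSym M N := fun i =>
  w.get ⟨(i % (w.length : ℤ)).toNat, by
    have h0 : 0 < w.length := List.length_pos_iff.mpr hw
    have h1 : (0 : ℤ) < (w.length : ℤ) := by exact_mod_cast h0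
    have h2 : 0 ≤ i % (w.length : ℤ) := Int.emod_nonneg i (ne_of_gt h1)
    have h3 : i % (w.length : ℤ) < (w.length : ℤ) := Int.emod_lt_of_pos i h1
    omega⟩

/-! A word reduces to `0` as soon as one of its factors does: read from a nonzero state, a word
only meets more open left brackets than when read from the unit. Powers of a neutral or negative
word reduce to products of left brackets, powers of a positive word to products of right brackets,
so no power reduces to `0`; and every block of the periodic sequence is a factor of a power. -/

section

variable {M N : ℕ}

lemma red_append (u v : List (DMSym M N)) : red (u ++ v) = v.foldl dyckStep (red u) :=
  List.foldl_append

lemma red_concat (v : List (DMSym M N)) (s : DMSym M N) :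
    red (v ++ [s]) = dyckStep (red v) s := by
  rw [red_append]; rfl

lemma foldl_dyckStep_none (v : List (DMSym M N)) : v.foldl dyckStep none = none := by
  induction v with
  | nil => rfl
  | cons s v ih => exact ih

lemma dyckStep_some_eq_some_nil {b a a' : List (Fin M)} {s : DMSym M N}
    (h : dyckStep (some (b, a)) s = some ([], a')) : b = [] := by
  cases s with
  | la k => exact (Option.some.inj h |> Prod.mk.inj).1
  | u k => exact (Option.some.inj h |> Prod.mk.inj).1
  | ra k =>
    cases ha : a.getLast? with
    | none => simp [dyckStep, ha] at h
    | some j => by_cases hj : j = k <;> simp_all [dyckStep]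

lemma dyckStep_some_append {bs₀ as₀ b a b' a' : List (Fin M)} {s : DMSym M N}
    (h : dyckStep (some (b, a)) s = some (b', a')) (h₀ : as₀ = [] ∨ b' = []) :
    dyckStep (some (bs₀ ++ b, as₀ ++ a)) s = some (bs₀ ++ b', as₀ ++ a') := by
  cases s with
  | la k => simp_all [dyckStep]
  | u k => simp_all [dyckStep]
  | ra k =>
    induction a using List.reverseRecOn with
    | nil =>
      obtain ⟨rfl, rfl⟩ : b ++ [k] = b' ∧ [] = a' := by simpa [dyckStep] using h
      obtain rfl : as₀ = [] := by simpa using h₀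
      simp [dyckStep]
    | append_singleton a j =>
      by_cases hj : j = k <;> simp_all [dyckStep]

lemma foldl_dyckStep_some {bs₀ as₀ : List (Fin M)} (v : List (DMSym M N)) {b a : List (Fin M)}
    (hv : red v = some (b, a)) (h₀ : as₀ = [] ∨ b = []) :
    v.foldl dyckStep (some (bs₀, as₀)) = some (bs₀ ++ b, as₀ ++ a) := by
  induction v using List.reverseRecOn generalizing b a with
  | nil =>
    obtain ⟨rfl, rfl⟩ : b = [] ∧ a = [] := by simpa [red] using hv.symm
    simp
  | append_singleton v s ih =>
    rw [red_concat] at hv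
    rw [List.foldl_concat]
    cases hv' : red v with
    | none => simp [hv', dyckStep] at hv
    | some p =>
      obtain ⟨b₁, a₁⟩ := p
      rw [hv'] at hv
      have h₁ : as₀ = [] ∨ b₁ = [] := h₀.imp_right fun hb => by
        subst hb; exact dyckStep_some_eq_some_nil hv
      rw [ih hv' h₁]
      exact dyckStep_some_append hv h₀

lemma exists_dyckStep_eq_some_of_append {b₁ b₂ a₂ b c a : List (Fin M)} {s : DMSym M N}
    (h : dyckStep (some (b₁, c ++ a)) s = some (b₂, a₂)) :
    ∃ b' a' c', dyckStep (some (b, a)) s = some (b', a') ∧ a₂ = c' ++ a' := by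
  cases s with
  | la k => exact ⟨b, a ++ [k], c, rfl, by simp_all [dyckStep]⟩
  | u k => exact ⟨b, a, c, rfl, by simp_all [dyckStep]⟩
  | ra k =>
    induction a using List.reverseRecOn with
    | nil => exact ⟨b ++ [k], [], a₂, by simp [dyckStep]⟩
    | append_singleton a j =>
      by_cases hj : j = k
      · exact ⟨b, a, c, by simp [dyckStep, hj], by simp_all [dyckStep]⟩
      · simp [dyckStep, ← List.append_assoc, hj] at h

lemma exists_red_eq_some_of_foldl_dyckStep (p : List (Fin M) × List (Fin M))
    (v : List (DMSym M N)) {b₂ a₂ : List (Fin M)}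
    (h : v.foldl dyckStep (some p) = some (b₂, a₂)) :
    ∃ b a c, red v = some (b, a) ∧ a₂ = c ++ a := by
  induction v using List.reverseRecOn generalizing b₂ a₂ with
  | nil => exact ⟨[], [], a₂, rfl, by simp⟩
  | append_singleton v s ih =>
    rw [List.foldl_concat] at h
    cases hv : v.foldl dyckStep (some p) with
    | none => simp [hv, dyckStep] at h
    | some q =>
      obtain ⟨b₁, a₁⟩ := q
      obtain ⟨b, a, c, hred, rfl⟩ := ih hv
      rw [hv] at h
      obtain ⟨b', a', c', hstep, rfl⟩ := exists_dyckStep_eq_some_of_append (b := b) h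
      exact ⟨b', a', c', by rw [red_concat, hred, hstep], rfl⟩

lemma red_ne_none_of_append_left {u v : List (DMSym M N)} (h : red (u ++ v) ≠ none) :
    red u ≠ none := fun hu => h (by rw [red_append, hu, foldl_dyckStep_none])

lemma red_ne_none_of_append_right {u v : List (DMSym M N)} (h : red (u ++ v) ≠ none) :
    red v ≠ none := by
  obtain ⟨p, hu⟩ := Option.ne_none_iff_exists'.mp (red_ne_none_of_append_left h)
  rw [red_append, hu] at h
  obtain ⟨⟨b₂, a₂⟩, h⟩ := Option.ne_none_iff_exists'.mp h
  obtain ⟨b, a, c, hred, -⟩ := exists_red_eq_some_of_foldl_dyckStep p v h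
  simp [hred]

lemma red_ne_none_of_isInfix {u v : List (DMSym M N)} (huv : u <:+: v) (hv : red v ≠ none) :
    red u ≠ none := by
  obtain ⟨s, t, rfl⟩ := huv
  exact red_ne_none_of_append_right (red_ne_none_of_append_left hv)

lemma red_flatten_replicate_of_fst_nil {w : List (DMSym M N)} {a : List (Fin M)}
    (hw : red w = some ([], a)) (n : ℕ) :
    ∃ a', red (List.replicate n w).flatten = some ([], a') := by
  induction n with
  | zero => exact ⟨[], rfl⟩
  | succ n ih =>
    obtain ⟨a', ih⟩ := ih
    refine ⟨a ++ a', ?_⟩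
    rw [List.replicate_succ, List.flatten_cons, red_append, hw,
      foldl_dyckStep_some _ ih (Or.inr rfl), List.append_nil]

lemma red_flatten_replicate_of_snd_nil {w : List (DMSym M N)} {b : List (Fin M)}
    (hw : red w = some (b, [])) (n : ℕ) :
    ∃ b', red (List.replicate n w).flatten = some (b', []) := by
  induction n with
  | zero => exact ⟨[], rfl⟩
  | succ n ih =>
    obtain ⟨b', ih⟩ := ih
    refine ⟨b ++ b', ?_⟩
    rw [List.replicate_succ, List.flatten_cons, red_append, hw,
      foldl_dyckStep_some _ ih (Or.inl rfl), List.append_nil]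

lemma red_flatten_replicate_ne_none {w : List (DMSym M N)}
    (h : NeutralWord w ∨ NegativeWord w ∨ PositiveWord w) (n : ℕ) :
    red (List.replicate n w).flatten ≠ none := by
  rcases h with h | ⟨a, -, h⟩ | ⟨b, -, h⟩
  · obtain ⟨a', h'⟩ := red_flatten_replicate_of_fst_nil h n; simp [h']
  · obtain ⟨a', h'⟩ := red_flatten_replicate_of_fst_nil h n; simp [h']
  · obtain ⟨b', h'⟩ := red_flatten_replicate_of_snd_nil h n; simp [h']

lemma getElem_flatten_replicate {α : Type*} {w : List α} (hw : w ≠ []) (n i : ℕ)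
    (hi : i < (List.replicate n w).flatten.length) :
    (List.replicate n w).flatten[i] =
      w[i % w.length]'(Nat.mod_lt _ (List.length_pos_iff.mpr hw)) := by
  induction n generalizing i with
  | zero => simp at hi
  | succ n ih =>
    simp only [List.replicate_succ, List.flatten_cons]
    rcases lt_or_ge i w.length with hiw | hiw
    · simp [List.getElem_append_left hiw, Nat.mod_eq_of_lt hiw]
    · simp only [List.getElem_append_right hiw, ih, Nat.mod_eq_sub_mod hiw]

@[simp] lemma length_wordAt (x : ℤ → DMSym M N) (j k : ℤ) :
    (wordAt x j k).length = (k + 1 - j).toNat := by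
  simp [wordAt]

@[simp] lemma getElem_wordAt (x : ℤ → DMSym M N) (j k : ℤ) (i : ℕ)
    (hi : i < (wordAt x j k).length) : (wordAt x j k)[i] = x (j + i) := by
  -- the coercion `List ℕ → List ℤ` in `wordAt` elaborates to a `flatMap`
  simp [wordAt, ← List.map_eq_flatMap]

lemma wordAt_isInfix_wordAt (x : ℤ → DMSym M N) {a b j k : ℤ} (ha : a ≤ j) (hb : k ≤ b) :
    wordAt x j k <:+: wordAt x a b := by
  rcases lt_or_ge k j with hkj | hjk
  · rw [List.eq_nil_of_length_eq_zero (by simp; omega : (wordAt x j k).length = 0)]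
    exact List.nil_infix
  refine List.infix_iff_getElem?.mpr ⟨(j - a).toNat, by simp; omega, fun i hi => ?_⟩
  simp only [length_wordAt] at hi
  rw [List.getElem?_eq_getElem (by simp; omega), getElem_wordAt, getElem_wordAt]
  congr 2
  omega

lemma admissibleWord_wordAt {x : ℤ → DMSym M N} (hx : x ∈ SigmaD M N) (j k : ℤ) :
    AdmissibleWord M N (wordAt x j k) :=
  ⟨x, hx, j, fun i => by simp⟩

lemma perSeq_apply (w : List (DMSym M N)) (hw : w ≠ []) (q : ℤ) (i : ℕ) :
    perSeq w hw (w.length * q + i) =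
      w[i % w.length]'(Nat.mod_lt _ (List.length_pos_iff.mpr hw)) := by
  have : (i % w.length : ℤ).toNat = i % w.length := by omega
  simp [perSeq, this]

lemma wordAt_perSeq (w : List (DMSym M N)) (hw : w ≠ []) (q : ℤ) (n : ℕ) :
    wordAt (perSeq w hw) (w.length * q) (w.length * q + (n * w.length : ℕ) - 1) =
      (List.replicate n w).flatten := by
  refine List.ext_getElem (by simp; omega) fun i _ hi => ?_
  rw [getElem_wordAt, perSeq_apply, getElem_flatten_replicate hw]

lemma perSeq_mem_SigmaD {w : List (DMSym M N)} (hw : w ≠ [])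
    (h : ∀ n, red (List.replicate n w).flatten ≠ none) : perSeq w hw ∈ SigmaD M N := by
  intro j k _
  have hL : 0 < w.length := List.length_pos_iff.mpr hw
  set q := j / w.length
  set n := (k + 1 - w.length * q).toNat
  have hq : w.length * q ≤ j := Int.mul_ediv_self_le (by omega)
  have hn : (n : ℤ) ≤ (n * w.length : ℕ) := by exact_mod_cast Nat.le_mul_of_pos_right n hL
  refine red_ne_none_of_isInfix ?_ (h n)
  rw [← wordAt_perSeq w hw q n]
  exact wordAt_isInfix_wordAt _ hq (by omega)

end

theorem periodic_words_admissible_general (M N : ℕ)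
    (w : List (DMSym M N)) (hw : w ≠ [])
    (h : NeutralWord w ∨ NegativeWord w ∨ PositiveWord w) :
    (∀ n : ℕ, 1 ≤ n → AdmissibleWord M N (List.replicate n w).flatten) ∧
    perSeq w hw ∈ SigmaD M N := by
  have hmem := perSeq_mem_SigmaD hw (red_flatten_replicate_ne_none h)
  refine ⟨fun n _ => ?_, hmem⟩
  rw [← wordAt_perSeq w hw 0 n]
  exact admissibleWord_wordAt hmem _ _

/-- If a word is neutral, negative or positive, then every `n`-fold concatenation of it is
an admissible word of `Σ_D`, and the bi-infinite periodic sequence obtained by repeating it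
belongs to `Σ_D`. -/
theorem periodic_words_admissible (M N : ℕ) (hM : 2 ≤ M)
    (w : List (DMSym M N)) (hw : w ≠ [])
    (h : NeutralWord w ∨ NegativeWord w ∨ PositiveWord w) :
    (∀ n : ℕ, 1 ≤ n → AdmissibleWord M N (List.replicate n w).flatten) ∧
    perSeq w hw ∈ SigmaD M N :=
  periodic_words_admissible_general M N w hw h
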